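/- Let V be a finite-dimensional real vector space, Ω₀ : V × V → ℝ a bilinear form, and α, β : V → V commuting linear maps (α∘β = β∘α). For h ∈ ℝ define Ω_h(x,y) := ∫₀ʰ Ω₀( exp(s(α+β))(exp(−hβ) x), exp(s(α+β))(exp(−hβ) y) ) ds. Then for every x, y ∈ V the function h ↦ Ω_h(x,y) is differentiable on ℝ, with derivative at h equal to Ω₀( exp(hα) x, exp(hα) y ) − Ω_h( βx, y ) − Ω_h( x, βy ). In particular Ω_0 = 0. -/

import Mathlib

/-- The exponential of a linear endomorphism of a finite-dimensional real normed space. -/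
noncomputable def expEnd (V : Type*) [NormedAddCommGroup V] [NormedSpace ℝ V]
    [FiniteDimensional ℝ V] (f : V →ₗ[ℝ] V) : V →L[ℝ] V :=
  NormedSpace.exp (LinearMap.toContinuousLinearMap f)

/-- The deformed form Ω_h(x,y) = ∫₀ʰ Ω₀(e^{s(α+β)} e^{−hβ} x, e^{s(α+β)} e^{−hβ} y) ds. -/
noncomputable def OmegaDef (V : Type*) [NormedAddCommGroup V] [NormedSpace ℝ V]
    [FiniteDimensional ℝ V] (Ω₀ : V →ₗ[ℝ] V →ₗ[ℝ] ℝ) (α β : V →ₗ[ℝ] V) (h : ℝ)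
    (x y : V) : ℝ :=
  ∫ s in (0 : ℝ)..h,
    Ω₀ (expEnd V (s • (α + β)) (expEnd V ((-h) • β) x))
       (expEnd V (s • (α + β)) (expEnd V ((-h) • β) y))

open NormedSpace

namespace Stmt10Aux

variable {V : Type*} [NormedAddCommGroup V] [NormedSpace ℝ V] [FiniteDimensional ℝ V]

/-- The continuous bilinear form corresponding to `Ω₀`. -/
noncomputable def cOm (Ω₀ : V →ₗ[ℝ] V →ₗ[ℝ] ℝ) : V →L[ℝ] V →L[ℝ] ℝ :=
  LinearMap.toContinuousLinearMap
    { toFun := fun u => LinearMap.toContinuousLinearMap (Ω₀ u)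
      map_add' := fun u v => by ext w; simp
      map_smul' := fun c u => by ext w; simp }

@[simp] lemma cOm_apply (Ω₀ : V →ₗ[ℝ] V →ₗ[ℝ] ℝ) (u v : V) : cOm Ω₀ u v = Ω₀ u v := by
  simp [cOm]

/-- The integrand, as a curve of continuous bilinear forms. -/
noncomputable def psi (Ω₀ : V →ₗ[ℝ] V →ₗ[ℝ] ℝ) (α β : V →ₗ[ℝ] V) (s : ℝ) :
    V →L[ℝ] V →L[ℝ] ℝ :=
  (cOm Ω₀).bilinearComp (expEnd V (s • (α + β))) (expEnd V (s • (α + β)))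

@[simp] lemma psi_apply (Ω₀ : V →ₗ[ℝ] V →ₗ[ℝ] ℝ) (α β : V →ₗ[ℝ] V) (s : ℝ) (u v : V) :
    psi Ω₀ α β s u v
      = Ω₀ (expEnd V (s • (α + β)) u) (expEnd V (s • (α + β)) v) := by
  simp [psi]

lemma continuous_expEnd_smul (f : V →ₗ[ℝ] V) :
    Continuous fun s : ℝ => expEnd V (s • f) := by
  have key : ∀ s : ℝ, expEnd V (s • f)
      = NormedSpace.exp (s • LinearMap.toContinuousLinearMap f) := by
    intro s; rw [expEnd, map_smul]
  simp only [key]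
  letI : NormedAlgebra ℚ (V →L[ℝ] V) := .restrictScalars ℚ ℝ (V →L[ℝ] V)
  exact exp_continuous.comp (continuous_id.smul continuous_const)

lemma continuous_psi (Ω₀ : V →ₗ[ℝ] V →ₗ[ℝ] ℝ) (α β : V →ₗ[ℝ] V) :
    Continuous (psi Ω₀ α β) := by
  have hE : Continuous fun s : ℝ => expEnd V (s • (α + β)) := continuous_expEnd_smul _
  have h1 : Continuous fun s : ℝ => (cOm Ω₀).comp (expEnd V (s • (α + β))) :=
    Continuous.clm_comp continuous_const hE
  have h2 : Continuous fun s : ℝ => ((cOm Ω₀).comp (expEnd V (s • (α + β)))).flip :=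
    (ContinuousLinearMap.flipₗᵢ ℝ V V ℝ).continuous.comp h1
  have h3 : Continuous fun s : ℝ =>
      (((cOm Ω₀).comp (expEnd V (s • (α + β)))).flip).comp (expEnd V (s • (α + β))) :=
    Continuous.clm_comp h2 hE
  exact (ContinuousLinearMap.flipₗᵢ ℝ V V ℝ).continuous.comp h3

/-- The deformed form as a curve of continuous bilinear forms (before the twist by
`e^{-hβ}`). -/
noncomputable def Phi (Ω₀ : V →ₗ[ℝ] V →ₗ[ℝ] ℝ) (α β : V →ₗ[ℝ] V) (h : ℝ) :
    V →L[ℝ] V →L[ℝ] ℝ :=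
  ∫ s in (0 : ℝ)..h, psi Ω₀ α β s

lemma omegaDef_eq (Ω₀ : V →ₗ[ℝ] V →ₗ[ℝ] ℝ) (α β : V →ₗ[ℝ] V) (h : ℝ) (x y : V) :
    OmegaDef V Ω₀ α β h x y
      = Phi Ω₀ α β h (expEnd V ((-h) • β) x) (expEnd V ((-h) • β) y) := by
  have hc : Continuous fun s : ℝ => psi Ω₀ α β s (expEnd V ((-h) • β) x) :=
    (ContinuousLinearMap.apply ℝ (V →L[ℝ] ℝ) (expEnd V ((-h) • β) x)).continuous.comp
      (continuous_psi Ω₀ α β)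
  rw [Phi, ContinuousLinearMap.intervalIntegral_apply
    ((continuous_psi Ω₀ α β).intervalIntegrable _ _),
    ContinuousLinearMap.intervalIntegral_apply (hc.intervalIntegrable _ _)]
  simp [OmegaDef, psi]

set_option synthInstance.maxHeartbeats 1000000 in
lemma hasDerivAt_Phi (Ω₀ : V →ₗ[ℝ] V →ₗ[ℝ] ℝ) (α β : V →ₗ[ℝ] V) (h : ℝ) :
    HasDerivAt (Phi Ω₀ α β) (psi Ω₀ α β h) h :=
  intervalIntegral.integral_hasDerivAt_right
    ((continuous_psi Ω₀ α β).intervalIntegrable _ _)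
    ((continuous_psi Ω₀ α β).stronglyMeasurableAtFilter _ _)
    (continuous_psi Ω₀ α β).continuousAt

lemma hasDerivAt_e (β : V →ₗ[ℝ] V) (h : ℝ) :
    HasDerivAt (fun h' : ℝ => expEnd V ((-h') • β))
      (expEnd V ((-h) • β) * (-(LinearMap.toContinuousLinearMap β))) h := by
  have key : ∀ h' : ℝ, expEnd V ((-h') • β)
      = exp (h' • (-(LinearMap.toContinuousLinearMap β))) := by
    intro h'
    rw [expEnd, map_smul, neg_smul, ← smul_neg]
  simp only [key]
  exact hasDerivAt_exp_smul_const (-(LinearMap.toContinuousLinearMap β)) h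

set_option synthInstance.maxHeartbeats 1000000 in
set_option maxHeartbeats 1000000 in
lemma exp_cancel (α β : V →ₗ[ℝ] V) (hαβ : α ∘ₗ β = β ∘ₗ α) (h : ℝ) :
    expEnd V (h • (α + β)) * expEnd V ((-h) • β) = expEnd V (h • α) := by
  set A := LinearMap.toContinuousLinearMap α with hA
  set B := LinearMap.toContinuousLinearMap β with hB
  have hco : Commute A B := by
    ext v
    simpa [ContinuousLinearMap.mul_apply, hA, hB] using LinearMap.congr_fun hαβ v
  have h1 : expEnd V (h • (α + β)) = exp (h • A + h • B) := by
    rw [expEnd, map_smul, map_add, smul_add]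
  have h2 : expEnd V ((-h) • β) = exp ((-h) • B) := by
    rw [expEnd, map_smul]
  have h3 : expEnd V (h • α) = exp (h • A) := by rw [expEnd, map_smul]
  letI : NormedAlgebra ℚ (V →L[ℝ] V) := .restrictScalars ℚ ℝ (V →L[ℝ] V)
  rw [h1, h2, h3, exp_add_of_commute ((hco.smul_left h).smul_right h), mul_assoc,
    ← exp_add_of_commute (((Commute.refl B).smul_left h).smul_right (-h))]
  have : h • B + (-h) • B = 0 := by rw [← add_smul, add_neg_cancel, zero_smul]
  rw [this, exp_zero, mul_one]

end Stmt10Aux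

set_option maxHeartbeats 1000000 in
set_option synthInstance.maxHeartbeats 1000000 in
/-- Let V be a finite-dimensional real vector space, Ω₀ a bilinear form, and
α, β commuting linear maps.  Then for every x, y ∈ V the function h ↦ Ω_h(x,y) is
differentiable on ℝ, with derivative at h equal to
Ω₀(e^{hα} x, e^{hα} y) − Ω_h(βx, y) − Ω_h(x, βy).  In particular Ω_0 = 0. -/
theorem statement10 (V : Type*) [NormedAddCommGroup V] [NormedSpace ℝ V]
    [FiniteDimensional ℝ V]
    (Ω₀ : V →ₗ[ℝ] V →ₗ[ℝ] ℝ) (α β : V →ₗ[ℝ] V) (hαβ : α ∘ₗ β = β ∘ₗ α) :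
    (∀ (x y : V) (h : ℝ),
      HasDerivAt (fun h' : ℝ => OmegaDef V Ω₀ α β h' x y)
        (Ω₀ (expEnd V (h • α) x) (expEnd V (h • α) y)
          - OmegaDef V Ω₀ α β h (β x) y - OmegaDef V Ω₀ α β h x (β y)) h) ∧
    (∀ x y : V, OmegaDef V Ω₀ α β 0 x y = 0) := by
  constructor
  · intro x y h
    have hcx : HasDerivAt (fun h' : ℝ => expEnd V ((-h') • β) x)
        (-(expEnd V ((-h) • β) (β x))) h := by
      have := (Stmt10Aux.hasDerivAt_e β h).clm_apply (hasDerivAt_const h x)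
      simpa [ContinuousLinearMap.mul_apply] using this
    have hcy : HasDerivAt (fun h' : ℝ => expEnd V ((-h') • β) y)
        (-(expEnd V ((-h) • β) (β y))) h := by
      have := (Stmt10Aux.hasDerivAt_e β h).clm_apply (hasDerivAt_const h y)
      simpa [ContinuousLinearMap.mul_apply] using this
    have hΦ := Stmt10Aux.hasDerivAt_Phi Ω₀ α β h
    have hA1 := hΦ.clm_apply hcx
    have hG := hA1.clm_apply hcy
    simp only [← Stmt10Aux.omegaDef_eq] at hG
    refine hG.congr_deriv ?_
    have hE : ∀ u : V, expEnd V (h • (α + β)) (expEnd V ((-h) • β) u)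
        = expEnd V (h • α) u := by
      intro u
      rw [← ContinuousLinearMap.mul_apply, Stmt10Aux.exp_cancel α β hαβ h]
    rw [Stmt10Aux.omegaDef_eq Ω₀ α β h (β x) y, Stmt10Aux.omegaDef_eq Ω₀ α β h x (β y)]
    simp only [Stmt10Aux.psi_apply, ContinuousLinearMap.add_apply, map_neg,
      ContinuousLinearMap.neg_apply, hE, sub_eq_add_neg]
  · intro x y
    simp [OmegaDef]
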